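/- arXiv:2206.00980 — 2 statements merged into one kernel-verified Lean document; each statement's English description precedes it below -/
import Mathlib

section
/- If a connected simple graph G of order n realizes the multiset S_{j,n} = {0,1,...,n} \ {j} as its Laplacian spectrum, then the join K₁ ∨ G on n+1 vertices has Laplacian spectrum equal to the multiset {0,1,...,n+1} with j+1 and 1 removed and n+1 counted twice, i.e., K₁ ∨ G realizes S_{{1,j+1},n+1}^{n+1}. -/
open SimpleGraph Polynomial

/-- The multiset of Laplacian eigenvalues (roots of the characteristic polynomial of the
Laplacian matrix over `ℝ`, with multiplicity) of a simple graph. -/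
noncomputable def lapSpec {V : Type*} [Fintype V] [DecidableEq V] (G : SimpleGraph V) :
    Multiset ℝ :=
  letI := Classical.decRel G.Adj
  ((G.lapMatrix ℝ).charpoly).roots

/-- The disjoint union of two simple graphs. -/
def graphUnion {α β : Type*} (G : SimpleGraph α) (H : SimpleGraph β) : SimpleGraph (α ⊕ β) :=
  SimpleGraph.fromRel fun x y =>
    (∃ a b, x = Sum.inl a ∧ y = Sum.inl b ∧ G.Adj a b) ∨
    (∃ a b, x = Sum.inr a ∧ y = Sum.inr b ∧ H.Adj a b)

/-- The join of two simple graphs: the disjoint union together with all edges between the parts. -/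
def graphJoin {α β : Type*} (G : SimpleGraph α) (H : SimpleGraph β) : SimpleGraph (α ⊕ β) :=
  SimpleGraph.fromRel fun x y =>
    (∃ a b, x = Sum.inl a ∧ y = Sum.inl b ∧ G.Adj a b) ∨
    (∃ a b, x = Sum.inr a ∧ y = Sum.inr b ∧ H.Adj a b) ∨
    (∃ a b, x = Sum.inl a ∧ y = Sum.inr b)

/-- `G` is a join of two nonempty graphs. -/
def IsJoin {γ : Type*} [Fintype γ] (G : SimpleGraph γ) : Prop :=
  ∃ (p q : ℕ) (F : SimpleGraph (Fin p)) (H : SimpleGraph (Fin q)),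
    0 < p ∧ 0 < q ∧ Nonempty (G ≃g graphJoin F H)

/-- The multiset `S_{{i,j},n}^m`: the integers `0,1,…,n` with `i` and `j` removed and an extra
copy of `m` added (so `m` is counted twice), viewed as a multiset of reals. -/
def Sdouble (i j n m : ℕ) : Multiset ℝ :=
  ((m ::ₘ (((Finset.range (n + 1)).val.erase i).erase j)).map (fun k : ℕ => (k : ℝ)))

/-- The multiset `S_{j,n} = {0,1,…,n} \ {j}`, viewed as a multiset of reals. -/
def Ssingle (j n : ℕ) : Multiset ℝ :=
  (((Finset.range (n + 1)).val.erase j).map (fun k : ℕ => (k : ℝ)))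

/-- The one-vertex graph `K₁`. -/
def K1 : SimpleGraph (Fin 1) := ⊥

/-- The complete graph `K₂` on two vertices. -/
def K2 : SimpleGraph (Fin 2) := ⊤

/-
The Laplacian of `K₁ ∨ G` is the block matrix `[[n, -𝟙ᵀ], [-𝟙, L_G + I]]`. Because `L_G + I` has
all row sums `1`, one column operation gives `(x - 1) χ_{K₁ ∨ G}(x) = x (x - n - 1) χ_G(x - 1)`:
the spectrum of `K₁ ∨ G` is that of `G` shifted by `1`, with the copy of `1` coming from the
eigenvalue `0` of `G` replaced by `0` and `n + 1`. Applied to `S_{j,n}` this shift produces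
`S_{{1,j+1},n+1}^{n+1}`.
-/
namespace Matrix

variable {R V : Type*} [CommRing R] [Fintype V] [DecidableEq V]

theorem det_fromBlocks_const_mul_of_mulVec_const (a b c d : R) (D : Matrix V V R)
    (hD : D *ᵥ (fun _ ↦ 1) = fun _ ↦ d) :
    d * (fromBlocks (of fun _ _ ↦ a) (of fun _ _ ↦ b) (of fun _ _ ↦ c) D :
      Matrix (Fin 1 ⊕ V) (Fin 1 ⊕ V) R).det = (a * d - Fintype.card V * b * c) * D.det := by
  -- Right multiplication by `T` replaces the first column by `d` times itself minus the sum of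
  -- the others, which clears the lower-left block.
  set T : Matrix (Fin 1 ⊕ V) (Fin 1 ⊕ V) R := fromBlocks (of fun _ _ ↦ d) 0 (of fun _ _ ↦ -c) 1
  have hT : T.det = d := by simp [T]
  have hD' : ∀ v, ∑ w, D v w = d := fun v ↦ by simpa [mulVec, dotProduct] using congrFun hD v
  calc d * (fromBlocks _ _ _ D).det = (fromBlocks _ _ _ D * T).det := by
        rw [det_mul, hT, mul_comm]
    _ = (fromBlocks (of fun _ _ ↦ a * d - Fintype.card V * b * c) (of fun _ _ ↦ b) 0 D).det := by
        congr 1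
        rw [fromBlocks_multiply]
        congr 1 <;> ext <;> simp [mul_apply, ← Finset.sum_mul, hD'] <;> ring
    _ = _ := by simp [det_fromBlocks_zero₂₁]

theorem charmatrix_mulVec_const {M : Matrix V V R} {r : R} (hM : M *ᵥ (fun _ ↦ 1) = fun _ ↦ r) :
    charmatrix M *ᵥ (fun _ ↦ 1) = fun _ ↦ X - C r := by
  ext v
  have hr : ∑ w, M v w = r := by simpa [mulVec, dotProduct] using congrFun hM v
  simp [charmatrix, mulVec, dotProduct, sub_apply, Finset.sum_sub_distrib, diagonal_apply, ← hr]

end Matrix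

lemma Polynomial.roots_comp_X_sub_one {R : Type*} [CommRing R] [IsDomain R] (p : R[X]) :
    (p.comp (X - 1)).roots = p.roots.map (· + 1) := by
  have h := roots_comp_C_mul_X_add_C p 1 (-1) isUnit_one
  simp only [map_one, one_mul, map_neg, ← sub_eq_add_neg] at h
  simpa [Ring.inverse_one, sub_neg_eq_add] using h

namespace SimpleGraph

section graphJoin

variable {α β : Type*} (F : SimpleGraph α) (H : SimpleGraph β)

@[simp]
lemma graphJoin_adj_inl_inl {a b : α} : (graphJoin F H).Adj (.inl a) (.inl b) ↔ F.Adj a b := by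
  simpa [graphJoin, F.adj_comm b a] using F.ne_of_adj

@[simp]
lemma graphJoin_adj_inr_inr {a b : β} : (graphJoin F H).Adj (.inr a) (.inr b) ↔ H.Adj a b := by
  simpa [graphJoin, H.adj_comm b a] using H.ne_of_adj

@[simp]
lemma graphJoin_adj_inl_inr (a : α) (b : β) : (graphJoin F H).Adj (.inl a) (.inr b) := by
  simp [graphJoin]

@[simp]
lemma graphJoin_adj_inr_inl (a : α) (b : β) : (graphJoin F H).Adj (.inr b) (.inl a) :=
  (graphJoin_adj_inl_inr F H a b).symm

variable [Fintype α] [Fintype β] [DecidableRel (graphJoin F H).Adj]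

lemma degree_graphJoin_inl [DecidableRel F.Adj] (a : α) :
    (graphJoin F H).degree (.inl a) = F.degree a + Fintype.card β := by
  rw [← card_neighborFinset_eq_degree, ← card_neighborFinset_eq_degree, ← Finset.card_univ,
    ← Finset.card_disjSum]
  congr 1
  ext (b | b) <;> simp

lemma degree_graphJoin_inr [DecidableRel H.Adj] (b : β) :
    (graphJoin F H).degree (.inr b) = H.degree b + Fintype.card α := by
  rw [← card_neighborFinset_eq_degree, ← card_neighborFinset_eq_degree, ← Finset.card_univ,
    add_comm, ← Finset.card_disjSum]
  congr 1
  ext (a | a) <;> simp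

variable [DecidableEq α] [DecidableEq β] [DecidableRel F.Adj] [DecidableRel H.Adj]

lemma lapMatrix_graphJoin (R : Type*) [Ring R] :
    (graphJoin F H).lapMatrix R =
      Matrix.fromBlocks (F.lapMatrix R + (Fintype.card β : R) • 1) (.of fun _ _ ↦ -1)
        (.of fun _ _ ↦ -1) (H.lapMatrix R + (Fintype.card α : R) • 1) := by
  ext (a | a) (b | b)
  · rcases eq_or_ne a b with rfl | hab
    · simp [lapMatrix, degMatrix, degree_graphJoin_inl]
    · simp [lapMatrix, degMatrix, hab]
  · simp [lapMatrix, degMatrix]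
  · simp [lapMatrix, degMatrix]
  · rcases eq_or_ne a b with rfl | hab
    · simp [lapMatrix, degMatrix, degree_graphJoin_inr]
    · simp [lapMatrix, degMatrix, hab]

end graphJoin

section K1

variable {V : Type*} [Fintype V] [DecidableEq V] (G : SimpleGraph V) [DecidableRel G.Adj]
  [DecidableRel (graphJoin K1 G).Adj]

open Matrix

lemma lapMatrix_graphJoin_K1 (R : Type*) [Ring R] :
    (graphJoin K1 G).lapMatrix R =
      fromBlocks (of fun _ _ ↦ (Fintype.card V : R)) (of fun _ _ ↦ -1) (of fun _ _ ↦ -1)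
        (G.lapMatrix R + 1) := by
  classical
  rw [lapMatrix_graphJoin]
  congr 1
  · ext i j
    simp [Subsingleton.elim i j, lapMatrix, degMatrix]
  · simp

theorem charpoly_lapMatrix_graphJoin_K1 (R : Type*) [CommRing R] :
    (X - 1) * ((graphJoin K1 G).lapMatrix R).charpoly =
      X * (X - C (Fintype.card V + 1 : R)) * (G.lapMatrix R).charpoly.comp (X - 1) := by
  have hrow : charmatrix (G.lapMatrix R + 1) *ᵥ (fun _ ↦ 1) = fun _ ↦ X - C 1 :=
    charmatrix_mulVec_const <| by
      rw [add_mulVec, lapMatrix_mulVec_const_eq_zero, one_mulVec, zero_add]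
  have hshift : (G.lapMatrix R + 1).charpoly = (G.lapMatrix R).charpoly.comp (X - 1) := by
    simpa [sub_eq_add_neg] using charpoly_sub_scalar (G.lapMatrix R) (-1)
  have hblocks : charmatrix ((graphJoin K1 G).lapMatrix R) =
      fromBlocks (of fun _ _ ↦ X - C (Fintype.card V : R)) (of fun _ _ ↦ 1) (of fun _ _ ↦ 1)
        (charmatrix (G.lapMatrix R + 1)) := by
    rw [lapMatrix_graphJoin_K1, charmatrix_fromBlocks]
    congr 1
    · ext i j
      simp [Subsingleton.elim i j, charmatrix_apply_eq]
    all_goals ext; simp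
  rw [charpoly, hblocks, ← C_1, det_fromBlocks_const_mul_of_mulVec_const _ _ _ _ _ hrow, C_1,
    ← charpoly, hshift, map_add, map_natCast, map_one]
  ring

end K1

end SimpleGraph

theorem lapSpec_graphJoin_K1 {V : Type*} [Fintype V] [DecidableEq V] (G : SimpleGraph V)
    {s : Multiset ℝ} (h : lapSpec G = 0 ::ₘ s) :
    lapSpec (graphJoin K1 G) = 0 ::ₘ (Fintype.card V + 1 : ℝ) ::ₘ s.map (· + 1) := by
  -- the instances `lapSpec` is defined with
  let := Classical.decRel G.Adj
  let := Classical.decRel (graphJoin K1 G).Adj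
  have key := G.charpoly_lapMatrix_graphJoin_K1 ℝ
  have hne : (X - 1) * ((graphJoin K1 G).lapMatrix ℝ).charpoly ≠ 0 :=
    ((monic_X_sub_C 1).mul (Matrix.charpoly_monic _)).ne_zero
  have hroots := congrArg roots key
  rw [roots_mul hne, roots_mul (key ▸ hne), roots_mul (left_ne_zero_of_mul (key ▸ hne)),
    roots_comp_X_sub_one, roots_X, roots_X_sub_C, ← C_1, roots_X_sub_C] at hroots
  change _ + lapSpec _ = _ + _ + (lapSpec G).map _ at hroots
  simp only [h, Multiset.map_cons, zero_add, Multiset.singleton_add, Multiset.cons_add] at hroots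
  rwa [Multiset.cons_swap _ 1, Multiset.cons_swap 0 1, Multiset.cons_inj_right] at hroots

lemma Multiset.range_succ_eq_map (n : ℕ) :
    Multiset.range (n + 1) = 0 ::ₘ (Multiset.range n).map Nat.succ := by
  simp [Multiset.range, List.range_succ_eq_map]

lemma zero_mem_Ssingle {j : ℕ} (hj : 0 < j) (n : ℕ) : (0 : ℝ) ∈ Ssingle j n := by
  simp [Ssingle, Multiset.mem_erase_of_ne hj.ne]
  omega

lemma Sdouble_one_succ_eq (j n : ℕ) :
    Sdouble 1 (j + 1) (n + 1) (n + 1) =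
      0 ::ₘ (n + 1 : ℝ) ::ₘ ((Ssingle j n).erase 0).map (· + 1) := by
  have hrange : ((Multiset.range (n + 1 + 1)).erase 1).erase (j + 1) =
      0 ::ₘ (((Multiset.range (n + 1)).erase j).erase 0).map Nat.succ := by
    rw [Multiset.range_succ_eq_map, Multiset.erase_cons_tail _ zero_ne_one,
      Multiset.erase_cons_tail _ (Nat.succ_ne_zero j).symm,
      Multiset.map_erase _ Nat.succ_injective, Multiset.map_erase _ Nat.succ_injective,
      Multiset.erase_comm]
    rfl
  rw [Sdouble, Ssingle, Finset.range_val, Finset.range_val, hrange, ← Nat.cast_zero (R := ℝ),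
    ← Multiset.map_erase (fun k : ℕ ↦ (k : ℝ)) Nat.cast_injective]
  simp [Multiset.cons_swap]

theorem join_K1_realizes_general {V : Type*} [Fintype V] [DecidableEq V] (G : SimpleGraph V)
    (n j : ℕ) (hcard : Fintype.card V = n)
    (hj1 : 1 ≤ j) (hspec : lapSpec G = Ssingle j n) :
    lapSpec (graphJoin K1 G) = Sdouble 1 (j + 1) (n + 1) (n + 1) := by
  have hspec₀ : lapSpec G = 0 ::ₘ (Ssingle j n).erase 0 := by
    rw [hspec, Multiset.cons_erase (zero_mem_Ssingle hj1 n)]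
  rw [lapSpec_graphJoin_K1 G hspec₀, Sdouble_one_succ_eq, hcard]

/-- If a connected graph `G` of order `n` realizes `S_{j,n}`, then `K₁ ∨ G` realizes
`S_{{1,j+1},n+1}^{n+1}`. -/
theorem join_K1_realizes {V : Type*} [Fintype V] [DecidableEq V] (G : SimpleGraph V)
    (n j : ℕ) (hcard : Fintype.card V = n) (hG : G.Connected)
    (hj1 : 1 ≤ j) (hjn : j ≤ n) (hspec : lapSpec G = Ssingle j n) :
    lapSpec (graphJoin K1 G) = Sdouble 1 (j + 1) (n + 1) (n + 1) :=
  join_K1_realizes_general G n j hcard hj1 hspec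
end

section
/- Let n ≥ 9 and suppose a simple connected graph G of order n has Laplacian spectrum equal to the multiset {0,1,...,n} \ {i,j} with some element m counted twice (0 < i < j ≤ n), i.e., G has integer Laplacian eigenvalues with exactly one repeated eigenvalue, repeated exactly twice. Then G is not the Cartesian product of two graphs each having at least 2 vertices. -/
open SimpleGraph Polynomial

/-! If `G ≅ F □ H` with `|F| = p` and `|H| = q`, then
`(p + q) I - L(F □ H) = (p I - L_F) ⊗ I + I ⊗ (q I - L_H)`, and `p I - L_F = L(F̄) + J` is positive
semidefinite, so every Laplacian eigenvalue of `G` is at most `p + q`. But `S_{{i,j},n}^m` contains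
one of `n - 2, n - 1, n`, and `n - 2 ≤ p + q` with `p q = n`, `p, q ≥ 2` forces `n ≤ 8`. -/

open Matrix
open scoped Kronecker

theorem Matrix.le_of_mem_roots_charpoly_of_posSemidef {n : Type*} [Fintype n] [DecidableEq n]
    {M : Matrix n n ℝ} {c t : ℝ} (h : (c • 1 - M).PosSemidef) (ht : t ∈ M.charpoly.roots) :
    t ≤ c := by
  have htM : t ∈ spectrum ℝ M := mem_spectrum_iff_isRoot_charpoly.2 (isRoot_of_mem_roots ht)
  have hct : c - t ∈ spectrum ℝ (c • 1 - M) := by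
    rw [← Algebra.algebraMap_eq_smul_one, ← spectrum.singleton_sub_eq]
    exact Set.sub_mem_sub rfl htM
  simpa using (posSemidef_iff_isHermitian_and_spectrum_nonneg.1 h).2 hct

namespace SimpleGraph

section

variable {V : Type*} [Fintype V] [DecidableEq V] (G : SimpleGraph V) [DecidableRel G.Adj]
  {R : Type*} [Ring R]

theorem card_smul_one_sub_lapMatrix :
    (Fintype.card V : R) • 1 - G.lapMatrix R = Gᶜ.lapMatrix R + of fun _ _ => 1 := by
  ext x y
  rcases eq_or_ne x y with rfl | hxy
  · have hdeg : G.degree x + Gᶜ.degree x + 1 = Fintype.card V := by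
      have := G.degree_lt_card_verts x
      rw [degree_compl]
      omega
    simp [lapMatrix, degMatrix, ← hdeg]
    abel
  · by_cases hadj : G.Adj x y <;> simp [lapMatrix, degMatrix, hxy, hadj]

theorem posSemidef_card_smul_one_sub_lapMatrix :
    ((Fintype.card V : ℝ) • 1 - G.lapMatrix ℝ).PosSemidef := by
  rw [card_smul_one_sub_lapMatrix]
  refine (posSemidef_lapMatrix ℝ Gᶜ).add ?_
  simpa [vecMulVec] using posSemidef_vecMulVec_self_star (1 : V → ℝ)

end

variable {α β : Type*} [Fintype α] [Fintype β] [DecidableEq α] [DecidableEq β]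
  (F : SimpleGraph α) (H : SimpleGraph β)

section

variable [DecidableRel F.Adj] [DecidableRel H.Adj] [DecidableRel (F □ H).Adj]

theorem lapMatrix_boxProd {R : Type*} [Ring R] :
    (F □ H).lapMatrix R = F.lapMatrix R ⊗ₖ 1 + 1 ⊗ₖ H.lapMatrix R := by
  ext ⟨a, b⟩ ⟨c, d⟩
  by_cases hac : a = c <;> by_cases hbd : b = d <;>
    simp [lapMatrix, degMatrix, one_apply, degree_boxProd, hac, hbd]

theorem posSemidef_card_add_card_smul_one_sub_lapMatrix_boxProd :
    (((Fintype.card α : ℝ) + Fintype.card β) • 1 - (F □ H).lapMatrix ℝ).PosSemidef := by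
  have hsplit : (((Fintype.card α : ℝ) + Fintype.card β) • 1 - (F □ H).lapMatrix ℝ) =
      ((Fintype.card α : ℝ) • 1 - F.lapMatrix ℝ) ⊗ₖ (1 : Matrix β β ℝ) +
        (1 : Matrix α α ℝ) ⊗ₖ ((Fintype.card β : ℝ) • 1 - H.lapMatrix ℝ) := by
    ext ⟨a, b⟩ ⟨c, d⟩
    simp [lapMatrix_boxProd, one_apply, mul_sub]
    split_ifs <;> simp_all; ring
  rw [hsplit]
  exact ((posSemidef_card_smul_one_sub_lapMatrix F).kronecker PosSemidef.one).add
    (PosSemidef.one.kronecker (posSemidef_card_smul_one_sub_lapMatrix H))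

end

theorem le_card_add_card_of_mem_lapSpec_boxProd {t : ℝ} (ht : t ∈ lapSpec (F □ H)) :
    t ≤ Fintype.card α + Fintype.card β := by
  let := Classical.decRel F.Adj
  let := Classical.decRel H.Adj
  let := Classical.decRel (F □ H).Adj
  simpa using Matrix.le_of_mem_roots_charpoly_of_posSemidef
    (posSemidef_card_add_card_smul_one_sub_lapMatrix_boxProd F H) ht

theorem Iso.lapMatrix_submatrix {V W : Type*} [Fintype V] [DecidableEq V] [Fintype W]
    [DecidableEq W] {G : SimpleGraph V} {G' : SimpleGraph W} [DecidableRel G.Adj]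
    [DecidableRel G'.Adj] (e : G ≃g G') (R : Type*) [Ring R] :
    (G'.lapMatrix R).submatrix e e = G.lapMatrix R := by
  ext x y
  rcases eq_or_ne x y with rfl | hxy
  · simp [lapMatrix, degMatrix]
  · simp [lapMatrix, degMatrix, hxy, e.map_adj_iff]

theorem Iso.lapSpec_eq {V W : Type*} [Fintype V] [DecidableEq V] [Fintype W] [DecidableEq W]
    {G : SimpleGraph V} {G' : SimpleGraph W} (e : G ≃g G') : lapSpec G = lapSpec G' := by
  classical
  rw [lapSpec, lapSpec, ← e.lapMatrix_submatrix, ← charpoly_reindex e.toEquiv.symm]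
  rfl

end SimpleGraph

theorem exists_mem_Sdouble_of_two_le (i j : ℕ) {n : ℕ} (m : ℕ) (hn : 2 ≤ n) :
    ∃ k : ℕ, n ≤ k + 2 ∧ (k : ℝ) ∈ Sdouble i j n m := by
  obtain ⟨k, hnk, hkn, hki, hkj⟩ : ∃ k, n ≤ k + 2 ∧ k ≤ n ∧ k ≠ i ∧ k ≠ j := by
    by_cases h₀ : n ≠ i ∧ n ≠ j
    · exact ⟨n, by omega, le_rfl, h₀⟩
    by_cases h₁ : n - 1 ≠ i ∧ n - 1 ≠ j
    · exact ⟨n - 1, by omega, by omega, h₁⟩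
    · exact ⟨n - 2, by omega, by omega, by omega, by omega⟩
  refine ⟨k, hnk, Multiset.mem_map.2 ⟨k, Multiset.mem_cons_of_mem ?_, rfl⟩⟩
  rw [Multiset.mem_erase_of_ne hkj, Multiset.mem_erase_of_ne hki, ← Finset.mem_def,
    Finset.mem_range]
  omega

theorem not_cartesian_product_general {V : Type*} [Fintype V] [DecidableEq V] (G : SimpleGraph V)
    (n i j m : ℕ) (hn : 9 ≤ n) (hcard : Fintype.card V = n)
    (hspec : lapSpec G = Sdouble i j n m) :
    ¬ ∃ (p q : ℕ) (F : SimpleGraph (Fin p)) (H : SimpleGraph (Fin q)),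
        2 ≤ p ∧ 2 ≤ q ∧ Nonempty (G ≃g F.boxProd H) := by
  rintro ⟨p, q, F, H, hp, hq, ⟨e⟩⟩
  have hpq : p * q = n := by simpa [hcard] using (Fintype.card_congr e.toEquiv).symm
  obtain ⟨k, hnk, hkG⟩ := exists_mem_Sdouble_of_two_le i j m (by omega : 2 ≤ n)
  rw [← hspec, e.lapSpec_eq] at hkG
  have hkpq : (k : ℝ) ≤ p + q := by simpa using le_card_add_card_of_mem_lapSpec_boxProd F H hkG
  have : k ≤ p + q := by exact_mod_cast hkpq
  nlinarith

/-- For `n ≥ 9`, a connected graph of order `n` realizing `S_{{i,j},n}^m` is not the Cartesian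
product of two graphs, each having at least two vertices. -/
theorem not_cartesian_product {V : Type*} [Fintype V] [DecidableEq V] (G : SimpleGraph V)
    (n i j m : ℕ) (hn : 9 ≤ n) (hcard : Fintype.card V = n) (hG : G.Connected)
    (hi : 0 < i) (hij : i < j) (hj : j ≤ n) (hm1 : 1 ≤ m) (hmn : m ≤ n)
    (hmi : m ≠ i) (hmj : m ≠ j)
    (hspec : lapSpec G = Sdouble i j n m) :
    ¬ ∃ (p q : ℕ) (F : SimpleGraph (Fin p)) (H : SimpleGraph (Fin q)),
        2 ≤ p ∧ 2 ≤ q ∧ Nonempty (G ≃g F.boxProd H) :=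
  not_cartesian_product_general G n i j m hn hcard hspec
end
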